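/- Let p_1,...,p_n ∈ [0,1], f the Bernoulli sum mass function with these parameters and f^{(i)} the leave-one-out mass functions. Define for k with f_k > 0: α_k = (Σ_i p_i'·p_i·f_{k-1}^{(i)})/((Σ_i p_i')·f_k) for nonnegative weights p_i' not all zero. If all p_i' ≥ 0 and f_k, f_{k+1} > 0, then α_{k+1} ≥ α_k. -/

import Mathlib

open Finset

/-- Probability mass function of a sum of independent Bernoulli random variables
indexed by the finite set `I`, with parameters `p i`. -/
def bernoulliSumPMF (I : Finset ℕ) (p : ℕ → ℝ) (k : ℤ) : ℝ :=
  if 0 ≤ k then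
    ∑ S ∈ I.powersetCard k.toNat, (∏ i ∈ S, p i) * (∏ i ∈ I \ S, (1 - p i))
  else 0

/-!
Write `g = f^{(i)}`, so that `f_m = (1 - p_i) g_m + p_i g_{m-1}`. Then
`g_k f_k - g_{k-1} f_{k+1} = (1 - p_i) (g_k² - g_{k-1} g_{k+1}) ≥ 0` by log-concavity of the
Bernoulli sum `g`. Weighting by `p_i' p_i` and summing over `i` gives
`(Σ_i p_i' p_i f^{(i)}_{k-1}) f_{k+1} ≤ (Σ_i p_i' p_i f^{(i)}_k) f_k`, which is `α_k ≤ α_{k+1}`.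
Log-concavity is proved by adding one Bernoulli summand at a time.
-/

namespace Finset

@[to_additive]
lemma prod_powersetCard_succ_insert {α β : Type*} [DecidableEq α] [CommMonoid β] {a : α}
    {s : Finset α} (ha : a ∉ s) (n : ℕ) (f : Finset α → β) :
    ∏ t ∈ powersetCard (n + 1) (insert a s), f t =
      (∏ t ∈ powersetCard (n + 1) s, f t) * ∏ t ∈ powersetCard n s, f (insert a t) := by
  rw [powersetCard_succ_insert ha, prod_union, prod_image]
  · exact insert_erase_invOn.2.injOn.mono fun t ht ↦ notMem_mono (mem_powersetCard.1 ht).1 ha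
  · aesop (add simp [disjoint_left, insert_subset_iff])

end Finset

section bernoulliSumPMF

variable {I : Finset ℕ} {p : ℕ → ℝ}

lemma bernoulliSumPMF_of_neg {k : ℤ} (hk : k < 0) : bernoulliSumPMF I p k = 0 := by
  simp [bernoulliSumPMF, not_le.mpr hk]

lemma bernoulliSumPMF_natCast (k : ℕ) :
    bernoulliSumPMF I p k =
      ∑ S ∈ I.powersetCard k, (∏ i ∈ S, p i) * ∏ i ∈ I \ S, (1 - p i) := by
  simp [bernoulliSumPMF]

lemma bernoulliSumPMF_zero : bernoulliSumPMF I p 0 = ∏ i ∈ I, (1 - p i) := by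
  simp [bernoulliSumPMF]

lemma bernoulliSumPMF_empty (k : ℤ) : bernoulliSumPMF ∅ p k = if k = 0 then 1 else 0 := by
  rcases lt_or_ge k 0 with hk | hk
  · simp [bernoulliSumPMF_of_neg hk, hk.ne]
  · lift k to ℕ using hk
    rw [bernoulliSumPMF_natCast]
    rcases k with _ | k
    · simp
    · rw [powersetCard_eq_empty.2 (by simp)]
      rw [sum_empty, if_neg (by omega)]

lemma bernoulliSumPMF_insert {i : ℕ} (hi : i ∉ I) (k : ℤ) :
    bernoulliSumPMF (insert i I) p k =
      (1 - p i) * bernoulliSumPMF I p k + p i * bernoulliSumPMF I p (k - 1) := by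
  rcases lt_or_ge k 0 with hk | hk
  · simp [bernoulliSumPMF_of_neg hk, bernoulliSumPMF_of_neg (show k - 1 < 0 by omega)]
  lift k to ℕ using hk
  rcases k with _ | k
  · rw [Nat.cast_zero, zero_sub, bernoulliSumPMF_of_neg neg_one_lt_zero, bernoulliSumPMF_zero,
      bernoulliSumPMF_zero, prod_insert hi]
    ring
  rw [show ((k + 1 : ℕ) : ℤ) - 1 = k by push_cast; ring, bernoulliSumPMF_natCast,
    bernoulliSumPMF_natCast, bernoulliSumPMF_natCast, sum_powersetCard_succ_insert hi, mul_sum,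
    mul_sum]
  congr 1 <;> refine sum_congr rfl fun S hS => ?_
  all_goals have hiS : i ∉ S := fun h => hi ((mem_powersetCard.1 hS).1 h)
  · rw [insert_sdiff_of_notMem _ hiS, prod_insert fun h => hi (mem_sdiff.1 h).1]
    ring
  · rw [insert_sdiff_insert, sdiff_insert_of_notMem hi, prod_insert hiS]
    ring

lemma bernoulliSumPMF_eq_of_mem {i : ℕ} (hi : i ∈ I) (k : ℤ) :
    bernoulliSumPMF I p k =
      (1 - p i) * bernoulliSumPMF (I \ {i}) p k + p i * bernoulliSumPMF (I \ {i}) p (k - 1) := by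
  conv_lhs => rw [← insert_erase hi, ← sdiff_singleton_eq_erase]
  exact bernoulliSumPMF_insert (by simp) k

end bernoulliSumPMF

/-- The Pólya frequency condition of order two, in adjacent-minor form: log-concavity without
internal zeros. Unlike `g (k - 1) * g (k + 1) ≤ g k ^ 2` alone, it is preserved under convolution
with a Bernoulli law. -/
def IsPF2 (g : ℤ → ℝ) : Prop :=
  ∀ ⦃a b : ℤ⦄, a ≤ b → g (a - 1) * g (b + 1) ≤ g a * g b

namespace IsPF2

variable {g : ℤ → ℝ}

lemma sub_two_mul_le (hg : IsPF2 g) {a b : ℤ} (hab : a ≤ b) :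
    g (a - 2) * g (b + 1) ≤ g a * g (b - 1) := by
  have hlo : g (a - 2) * g (b + 1) ≤ g (a - 1) * g b := by
    simpa only [sub_sub, one_add_one_eq_two] using hg (show a - 1 ≤ b by omega)
  refine hlo.trans ?_
  rcases hab.eq_or_lt with rfl | hab
  · rw [mul_comm]
  · simpa only [sub_add_cancel] using hg (show a ≤ b - 1 by omega)

lemma bernoulli_conv (hg : IsPF2 g) {q : ℝ} (hq₀ : 0 ≤ q) (hq₁ : q ≤ 1) :
    IsPF2 fun m => (1 - q) * g m + q * g (m - 1) := by
  intro a b hab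
  have h₁ := hg hab
  have h₂ : g (a - 2) * g b ≤ g (a - 1) * g (b - 1) := by
    simpa only [sub_sub, one_add_one_eq_two, sub_add_cancel] using
      hg (show a - 1 ≤ b - 1 by omega)
  have h₃ := hg.sub_two_mul_le hab
  simp only [sub_sub, one_add_one_eq_two, add_sub_cancel_right]
  have hr : 0 ≤ 1 - q := sub_nonneg.2 hq₁
  nlinarith [mul_le_mul_of_nonneg_left h₁ (mul_nonneg hr hr),
    mul_le_mul_of_nonneg_left h₂ (mul_nonneg hq₀ hq₀),
    mul_le_mul_of_nonneg_left h₃ (mul_nonneg hr hq₀)]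

end IsPF2

lemma isPF2_bernoulliSumPMF {I : Finset ℕ} {p : ℕ → ℝ}
    (hp : ∀ i ∈ I, 0 ≤ p i ∧ p i ≤ 1) :
    IsPF2 (bernoulliSumPMF I p) := by
  induction I using Finset.induction_on with
  | empty =>
    intro a b hab
    simp only [bernoulliSumPMF_empty]
    split_ifs <;> first | omega | norm_num
  | insert i I hi ih =>
    rw [funext (bernoulliSumPMF_insert (p := p) hi)]
    exact (ih fun j hj => hp j (mem_insert_of_mem hj)).bernoulli_conv
      (hp i (mem_insert_self i I)).1 (hp i (mem_insert_self i I)).2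

lemma bernoulliSumPMF_sdiff_mul_le {I : Finset ℕ} {p : ℕ → ℝ}
    (hp : ∀ i ∈ I, 0 ≤ p i ∧ p i ≤ 1) {i : ℕ} (hi : i ∈ I) (k : ℤ) :
    bernoulliSumPMF (I \ {i}) p (k - 1) * bernoulliSumPMF I p (k + 1) ≤
      bernoulliSumPMF (I \ {i}) p k * bernoulliSumPMF I p k := by
  have hg := isPF2_bernoulliSumPMF (I := I \ {i}) (fun j hj => hp j (mem_sdiff.1 hj).1)
    (le_refl k)
  rw [bernoulliSumPMF_eq_of_mem hi, bernoulliSumPMF_eq_of_mem hi k, add_sub_cancel_right]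
  nlinarith [mul_le_mul_of_nonneg_left hg (sub_nonneg.2 (hp i hi).2)]

theorem shepp_olkin_alpha_monotone_general (n : ℕ) (p p' : ℕ → ℝ)
    (hp : ∀ i ∈ Finset.range n, 0 ≤ p i ∧ p i ≤ 1)
    (hp' : ∀ i ∈ Finset.range n, 0 ≤ p' i)
    (f : ℤ → ℝ) (hf : ∀ k, f k = bernoulliSumPMF (Finset.range n) p k)
    (f' : ℕ → ℤ → ℝ)
    (hf' : ∀ i ∈ Finset.range n, ∀ k, f' i k = bernoulliSumPMF (Finset.range n \ {i}) p k)
    (α : ℤ → ℝ)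
    (hα : ∀ k, α k = (∑ i ∈ Finset.range n, p' i * p i * f' i (k - 1)) /
      ((∑ i ∈ Finset.range n, p' i) * f k))
    (k : ℤ) (hfk : 0 < f k) (hfk1 : 0 < f (k + 1)) :
    α k ≤ α (k + 1) := by
  have key : (∑ i ∈ range n, p' i * p i * f' i (k - 1)) * f (k + 1) ≤
      (∑ i ∈ range n, p' i * p i * f' i (k + 1 - 1)) * f k := by
    simp only [sum_mul, add_sub_cancel_right, mul_assoc]
    refine sum_le_sum fun i hi => mul_le_mul_of_nonneg_left ?_ (hp' i hi)
    refine mul_le_mul_of_nonneg_left ?_ (hp i hi).1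
    simpa only [hf, hf' i hi] using bernoulliSumPMF_sdiff_mul_le hp hi k
  rw [hα, hα, div_mul_eq_div_div_swap, div_mul_eq_div_div_swap]
  exact div_le_div_of_nonneg_right ((div_le_div_iff₀ hfk hfk1).2 key) (sum_nonneg hp')

theorem shepp_olkin_alpha_monotone (n : ℕ) (p p' : ℕ → ℝ)
    (hp : ∀ i ∈ Finset.range n, 0 ≤ p i ∧ p i ≤ 1)
    (hp' : ∀ i ∈ Finset.range n, 0 ≤ p' i)
    (hp'sum : 0 < ∑ i ∈ Finset.range n, p' i)
    (f : ℤ → ℝ) (hf : ∀ k, f k = bernoulliSumPMF (Finset.range n) p k)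
    (f' : ℕ → ℤ → ℝ)
    (hf' : ∀ i ∈ Finset.range n, ∀ k, f' i k = bernoulliSumPMF (Finset.range n \ {i}) p k)
    (α : ℤ → ℝ)
    (hα : ∀ k, α k = (∑ i ∈ Finset.range n, p' i * p i * f' i (k - 1)) /
      ((∑ i ∈ Finset.range n, p' i) * f k))
    (k : ℤ) (hfk : 0 < f k) (hfk1 : 0 < f (k + 1)) :
    α k ≤ α (k + 1) :=
  shepp_olkin_alpha_monotone_general n p p' hp hp' f hf f' hf' α hα k hfk hfk1
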